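/- arXiv:2312.00400 — 3 statements merged into one kernel-verified Lean document; each statement's English description precedes it below -/
import Mathlib

section
/- Let Ω_0 be the Weyl group of type C_n with simple generators t_1,…,t_n as above (t_1 the long-root reflection), and let Ω'_0 be the subgroup generated by t'_2 := t_2 t_1 t_2 and t'_i := t_i for 3 ≤ i ≤ n, which is a Coxeter group of type C_{n−1}. If t'_{i_1} ⋯ t'_{i_ℓ} is a reduced expression for w ∈ Ω'_0 with respect to the generators t'_2,…,t'_n, then replacing each occurrence of t'_2 by t_2 t_1 t_2 and leaving the other letters unchanged yields a reduced expression for w in Ω_0 with respect to t_1,…,t_n. -/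
/-- Generators of the Weyl group of type `Cₙ` as signed-permutation matrices:
`genC n ⟨0,_⟩` is the sign change in the first coordinate (reflection along
`2ε₁`), and for `i ≥ 1`, `genC n i` swaps the coordinates `i-1` and `i`
(reflection along `ε_{i+1} − ε_i`). -/
noncomputable def genC (n : ℕ) (i : Fin n) : Matrix (Fin n) (Fin n) ℝ :=
  if i.val = 0 then
    Matrix.diagonal (fun j => if j = i then (-1 : ℝ) else 1)
  else
    Matrix.of fun a b =>
      if a = Equiv.swap i ⟨i.val - 1, lt_of_le_of_lt (Nat.sub_le _ _) i.isLt⟩ b then (1 : ℝ) else 0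

/-- Generators `t'_2 = t₂ t₁ t₂, t'_3 = t₃, …, t'_n = t_n` of the subgroup
`Ω'₀` (of type `C_{n−1}`), indexed by `i : Fin n` with `1 ≤ i.val`. -/
noncomputable def genC' (n : ℕ) (hn : 0 < n) (i : Fin n) : Matrix (Fin n) (Fin n) ℝ :=
  if i.val = 1 then genC n i * genC n ⟨0, hn⟩ * genC n i else genC n i

/-!
An element `M` of `Ω₀` is recorded by its window `M *ᵥ (1, …, n)`, a signed permutation of
`1, …, n`: left multiplication by `t₁` negates the first entry, by `t_i` swaps entries `i - 1`
and `i`, and by `t'₂` negates the second entry. On windows take the Björner–Brenti statistic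
`ℓ = inv + nsp + neg`. Each `t_i` changes `ℓ` by `±1`, so `ℓ(M)` is at most the length of any
word for `M`. On the windows beginning with `1` (those of `Ω'₀`), `t'₂` changes `ℓ` by `±3` and
`neg` by `±1` with the same sign, while `t'_i = t_i` (`i ≥ 3`) changes `ℓ` by `±1` and fixes
`neg`. Hence along a word of length `k` in the `t'_i` with `c` letters `t'₂` we get
`ℓ - 3 neg ≤ k - c`; and a descent argument gives a word in the `t'_i` of length at most
`ℓ - 2 neg`. For a reduced word the latter forces `k ≤ ℓ - 2 neg`, and together `ℓ ≥ k + 2c`,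
the length of the expanded word.
-/

open Matrix

lemma Fintype.sum_add_eq_sum_add_of_forall {ι : Type*} [Fintype ι] [DecidableEq ι]
    {f g : ι → ℕ} (i j : ι) (x y : ℕ)
    (h : ∀ a, f a + (if a = i then x else 0) = g a + (if a = j then y else 0)) :
    ∑ a, f a + x = ∑ a, g a + y := by
  have := Finset.sum_congr rfl fun a (_ : a ∈ Finset.univ) => h a
  simpa only [Finset.sum_add_distrib, Finset.sum_ite_eq', Finset.mem_univ, if_true] using this

lemma Fin.strictMono_of_val_eq_succ {n : ℕ} {α : Type*} [Preorder α] {f : Fin n → α}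
    (h : ∀ a b : Fin n, b.val = a.val + 1 → f a < f b) : StrictMono f := by
  cases n with
  | zero => exact fun a => a.elim0
  | succ m => exact Fin.strictMono_iff_lt_succ.2 fun i => h _ _ (by simp)

lemma Fin.swap_apply_lt_swap_apply_iff {n : ℕ} {j k a b : Fin n} (hjk : j.val + 1 = k.val)
    (h : (a, b) ≠ (j, k)) (h' : (a, b) ≠ (k, j)) :
    Equiv.swap j k a < Equiv.swap j k b ↔ a < b := by
  simp only [ne_eq, Prod.mk.injEq, Fin.ext_iff] at h h'
  simp only [Equiv.swap_apply_def, Fin.lt_def, Fin.ext_iff]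
  split_ifs <;> omega

noncomputable section

namespace TypeC

variable {n : ℕ}

def prev (i : Fin n) : Fin n := ⟨i.val - 1, lt_of_le_of_lt (Nat.sub_le _ _) i.isLt⟩

lemma genC_of_ne_zero {i : Fin n} (hi : i.val ≠ 0) : genC n i = swap ℝ i (prev i) := by
  ext a b
  simp only [genC, hi, if_false, of_apply, swap, Equiv.Perm.permMatrix, PEquiv.toMatrix_apply,
    Equiv.toPEquiv_apply, Option.mem_def, Option.some.injEq, prev, Equiv.swap_apply_eq_iff]

lemma genC_zero (hn : 0 < n) :
    genC n ⟨0, hn⟩ = diagonal fun j => if j = ⟨0, hn⟩ then -1 else 1 :=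
  if_pos rfl

lemma genC_mul_self (i : Fin n) : genC n i * genC n i = 1 := by
  by_cases hi : i.val = 0
  · rw [show i = ⟨0, i.pos⟩ from Fin.ext hi, genC_zero, diagonal_mul_diagonal, ← diagonal_one]
    congr 1; funext j; split_ifs <;> norm_num
  · rw [genC_of_ne_zero hi, swap_mul_self]

lemma genC_mul_genC_mul (i : Fin n) (M : Matrix (Fin n) (Fin n) ℝ) :
    genC n i * (genC n i * M) = M := by
  rw [← mul_assoc, genC_mul_self, one_mul]

lemma genC'_mul_self (hn : 0 < n) (i : Fin n) : genC' n hn i * genC' n hn i = 1 := by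
  unfold genC'
  split_ifs
  · simp only [mul_assoc, genC_mul_genC_mul, genC_mul_self]
  · exact genC_mul_self i

lemma genC_mulVec_of_ne_zero {i : Fin n} (hi : i.val ≠ 0) (u : Fin n → ℝ) :
    genC n i *ᵥ u = u ∘ Equiv.swap i (prev i) := by
  rw [genC_of_ne_zero hi, swap_mulVec]

lemma genC_zero_mulVec (hn : 0 < n) (u : Fin n → ℝ) :
    genC n ⟨0, hn⟩ *ᵥ u = Function.update u ⟨0, hn⟩ (-u ⟨0, hn⟩) := by
  ext j
  rw [genC_zero, mulVec_diagonal, Function.update_apply]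
  split_ifs with h
  · rw [h]; ring
  · ring

lemma genC'_mulVec_of_val_eq_one (hn : 0 < n) {i : Fin n} (hi : i.val = 1) (u : Fin n → ℝ) :
    genC' n hn i *ᵥ u = Function.update u i (-u i) := by
  have hprev : prev i = ⟨0, hn⟩ := Fin.ext (by simp [prev, hi])
  have h0i : (⟨0, hn⟩ : Fin n) ≠ i := fun h => by simp [← h] at hi
  rw [genC', if_pos hi, ← mulVec_mulVec, ← mulVec_mulVec, genC_mulVec_of_ne_zero (by omega),
    genC_zero_mulVec, genC_mulVec_of_ne_zero (by omega), hprev]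
  ext a
  by_cases hai : a = i
  · subst hai
    simp [Equiv.swap_apply_left]
  by_cases ha0 : a = ⟨0, hn⟩
  · subst ha0
    simp [Equiv.swap_apply_right, hai, h0i.symm]
  · simp [Equiv.swap_apply_of_ne_of_ne hai ha0, hai, ha0]

def idWindow : Fin n → ℝ := fun a => (a : ℝ) + 1

def window (M : Matrix (Fin n) (Fin n) ℝ) : Fin n → ℝ := M *ᵥ idWindow

lemma window_mul (A M : Matrix (Fin n) (Fin n) ℝ) : window (A * M) = A *ᵥ window M :=
  (mulVec_mulVec _ _ _).symm

lemma window_one : window (1 : Matrix (Fin n) (Fin n) ℝ) = idWindow := one_mulVec _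

/-- The signed permutation matrix with window `u`: row `a` has `u a / |u a| = ±1` in column
`|u a| - 1`. -/
def windowMatrix (u : Fin n → ℝ) : Matrix (Fin n) (Fin n) ℝ :=
  of fun a b => if |u a| = (b : ℝ) + 1 then u a / ((b : ℝ) + 1) else 0

lemma windowMatrix_idWindow : windowMatrix (idWindow (n := n)) = 1 := by
  ext a b
  have hb : (0 : ℝ) < (b : ℝ) + 1 := by positivity
  simp only [windowMatrix, idWindow, of_apply, one_apply,
    abs_of_pos (by positivity : (0 : ℝ) < a + 1), add_left_inj, Nat.cast_inj, Fin.val_inj]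
  split_ifs with h
  · subst h; exact div_self hb.ne'
  · rfl

lemma genC_mul_windowMatrix (i : Fin n) (u : Fin n → ℝ) :
    genC n i * windowMatrix u = windowMatrix (genC n i *ᵥ u) := by
  by_cases hi : i.val = 0
  · have hi0 : i = ⟨0, i.pos⟩ := Fin.ext hi
    rw [hi0, genC_zero_mulVec, genC_zero]
    ext a b
    rw [diagonal_mul]
    by_cases ha : a = ⟨0, i.pos⟩
    · simp [windowMatrix, ha, neg_div]
    · simp [windowMatrix, ha]
  · rw [genC_mulVec_of_ne_zero hi, genC_of_ne_zero hi, swap, Equiv.Perm.permMatrix,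
      PEquiv.toMatrix_toPEquiv_mul]
    rfl

lemma prod_map_genC_eq_windowMatrix (l : List (Fin n)) :
    (l.map (genC n)).prod = windowMatrix (window (l.map (genC n)).prod) := by
  suffices h : ∀ u, (l.map (genC n)).prod * windowMatrix u =
      windowMatrix ((l.map (genC n)).prod *ᵥ u) by
    rw [window, ← h, windowMatrix_idWindow, mul_one]
  induction l with
  | nil => simp
  | cons i l ih =>
    intro u
    rw [List.map_cons, List.prod_cons, mul_assoc, ih, genC_mul_windowMatrix, mulVec_mulVec]

def expandWord (hn : 0 < n) (l : List (Fin n)) : List (Fin n) :=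
  l.foldr (fun i acc => (if i.val = 1 then [i, ⟨0, hn⟩, i] else [i]) ++ acc) []

lemma prod_map_genC_expandWord (hn : 0 < n) (l : List (Fin n)) :
    ((expandWord hn l).map (genC n)).prod = (l.map (genC' n hn)).prod := by
  induction l with
  | nil => rfl
  | cons i l ih =>
    rw [expandWord, List.foldr_cons, ← expandWord, List.map_append, List.prod_append, ih,
      List.map_cons, List.prod_cons, genC']
    split_ifs <;> simp [mul_assoc]

lemma length_expandWord (hn : 0 < n) (l : List (Fin n)) :
    (expandWord hn l).length = l.length + 2 * l.countP (fun i => i.val = 1) := by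
  induction l with
  | nil => rfl
  | cons i l ih =>
    rw [expandWord, List.foldr_cons, ← expandWord, List.length_append, ih, List.countP_cons]
    split_ifs <;> simp_all <;> omega

lemma prod_map_genC'_eq_of_window_eq (hn : 0 < n) {l m : List (Fin n)}
    (h : window (l.map (genC' n hn)).prod = window (m.map (genC' n hn)).prod) :
    (l.map (genC' n hn)).prod = (m.map (genC' n hn)).prod := by
  simp only [← prod_map_genC_expandWord] at h ⊢
  rw [prod_map_genC_eq_windowMatrix, h, ← prod_map_genC_eq_windowMatrix]

def pairInv (x y : ℝ) : ℕ := (if y < x then 1 else 0) + (if x + y < 0 then 1 else 0)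

lemma pairInv_neg_left (x y : ℝ) : pairInv (-x) y = pairInv x y := by
  simp only [pairInv, lt_neg_iff_add_neg', neg_add_neg_iff]
  omega

lemma pairInv_add_ite_lt (x y : ℝ) :
    pairInv x y + (if x < y then 1 else 0) = pairInv y x + (if y < x then 1 else 0) := by
  unfold pairInv
  rw [add_comm y x]
  omega

def negCount (u : Fin n → ℝ) : ℕ := ∑ a, if u a < 0 then 1 else 0

/-- Björner–Brenti's `inv + nsp + neg` (*Combinatorics of Coxeter groups*, Prop. 8.1.1): a pair
of positions `a < b` contributes `pairInv (u a) (u b)`. -/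
def windowLength (u : Fin n → ℝ) : ℕ :=
  (∑ p : Fin n × Fin n, if p.1 < p.2 then pairInv (u p.1) (u p.2) else 0) + negCount u

lemma negCount_comp_perm (u : Fin n → ℝ) (σ : Equiv.Perm (Fin n)) :
    negCount (u ∘ σ) = negCount u :=
  Equiv.sum_comp σ fun a => if u a < 0 then 1 else 0

lemma negCount_update_neg (u : Fin n → ℝ) (k : Fin n) :
    negCount (Function.update u k (-u k)) + (if u k < 0 then 1 else 0) =
      negCount u + (if 0 < u k then 1 else 0) := by
  refine Fintype.sum_add_eq_sum_add_of_forall k k _ _ fun a => ?_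
  by_cases ha : a = k
  · subst ha; simp only [Function.update_self, if_true, neg_lt_zero]; omega
  · simp [ha]

lemma windowLength_comp_swap (u : Fin n → ℝ) {j k : Fin n} (hjk : j.val + 1 = k.val) :
    windowLength (u ∘ Equiv.swap j k) + (if u k < u j then 1 else 0) =
      windowLength u + (if u j < u k then 1 else 0) := by
  set τ := Equiv.swap j k
  have hjk' : j < k := Fin.lt_def.2 (by omega)
  have hreindex :
      (∑ p : Fin n × Fin n, if p.1 < p.2 then pairInv ((u ∘ τ) p.1) ((u ∘ τ) p.2) else 0) =
        ∑ p : Fin n × Fin n, if τ p.1 < τ p.2 then pairInv (u p.1) (u p.2) else 0 := by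
    rw [← Equiv.sum_comp (τ.prodCongr τ)]
    simp [τ]
  have hpairs := Fintype.sum_add_eq_sum_add_of_forall
    (f := fun p : Fin n × Fin n => if τ p.1 < τ p.2 then pairInv (u p.1) (u p.2) else 0)
    (g := fun p => if p.1 < p.2 then pairInv (u p.1) (u p.2) else 0)
    (j, k) (k, j) (pairInv (u j) (u k)) (pairInv (u k) (u j)) fun p => by
      by_cases h1 : p = (j, k)
      · subst h1; simp [τ, hjk', hjk'.ne, hjk'.not_gt]
      by_cases h2 : p = (k, j)
      · subst h2; simp [τ, hjk', hjk'.ne, hjk'.not_gt]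
      simp only [h1, h2, if_false, τ, Fin.swap_apply_lt_swap_apply_iff hjk h1 h2]
  have := pairInv_add_ite_lt (u j) (u k)
  unfold windowLength
  rw [hreindex, negCount_comp_perm]
  omega

lemma negCount_idWindow : negCount (idWindow (n := n)) = 0 :=
  Finset.sum_eq_zero fun a _ => if_neg (by simp only [idWindow, not_lt]; positivity)

lemma windowLength_idWindow : windowLength (idWindow (n := n)) = 0 := by
  rw [windowLength, negCount_idWindow, add_zero]
  refine Finset.sum_eq_zero fun p _ => ?_
  split_ifs with h
  · have : (p.1 : ℝ) ≤ p.2 := by exact_mod_cast h.le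
    rw [pairInv, if_neg (not_lt.2 (by simp only [idWindow]; linarith)),
      if_neg (not_lt.2 (by simp only [idWindow]; positivity))]
    rfl
  · rfl

lemma windowLength_update_neg_zero (hn : 0 < n) (u : Fin n → ℝ) :
    windowLength (Function.update u ⟨0, hn⟩ (-u ⟨0, hn⟩)) + (if u ⟨0, hn⟩ < 0 then 1 else 0) =
      windowLength u + (if 0 < u ⟨0, hn⟩ then 1 else 0) := by
  have hneg := negCount_update_neg u ⟨0, hn⟩
  set u' := Function.update u ⟨0, hn⟩ (-u ⟨0, hn⟩)
  have hpair : ∀ p : Fin n × Fin n, p.1 < p.2 →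
      pairInv (u' p.1) (u' p.2) = pairInv (u p.1) (u p.2) := by
    rintro ⟨a, b⟩ hab
    have hb : b ≠ ⟨0, hn⟩ := fun h => by simp [h, Fin.lt_def] at hab
    by_cases ha : a = ⟨0, hn⟩
    · subst ha; simp [u', hb, pairInv_neg_left]
    · simp [u', ha, hb]
  have hpairs : (∑ p : Fin n × Fin n, if p.1 < p.2 then pairInv (u' p.1) (u' p.2) else 0) =
      ∑ p : Fin n × Fin n, if p.1 < p.2 then pairInv (u p.1) (u p.2) else 0 :=
    Finset.sum_congr rfl fun p _ => by by_cases h : p.1 < p.2 <;> simp [h, hpair]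
  unfold windowLength
  omega

lemma windowLength_genC_mulVec {i : Fin n} (hi : i.val ≠ 0) (u : Fin n → ℝ) :
    windowLength (genC n i *ᵥ u) + (if u i < u (prev i) then 1 else 0) =
      windowLength u + (if u (prev i) < u i then 1 else 0) := by
  rw [genC_mulVec_of_ne_zero hi, Equiv.swap_comm]
  exact windowLength_comp_swap u (by simp [prev]; omega)

lemma negCount_genC_mulVec {i : Fin n} (hi : i.val ≠ 0) (u : Fin n → ℝ) :
    negCount (genC n i *ᵥ u) = negCount u := by
  rw [genC_mulVec_of_ne_zero hi, negCount_comp_perm]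

lemma windowLength_genC_mulVec_le (i : Fin n) (u : Fin n → ℝ) :
    windowLength (genC n i *ᵥ u) ≤ windowLength u + 1 := by
  by_cases hi : i.val = 0
  · have := windowLength_update_neg_zero i.pos u
    rw [show i = ⟨0, i.pos⟩ from Fin.ext hi, genC_zero_mulVec]
    split_ifs at this <;> omega
  · have := windowLength_genC_mulVec hi u
    split_ifs at this <;> omega

lemma windowLength_window_prod_le (l : List (Fin n)) :
    windowLength (window (l.map (genC n)).prod) ≤ l.length := by
  induction l with
  | nil => simp [window_one, windowLength_idWindow]
  | cons i l ih =>
    rw [List.map_cons, List.prod_cons, window_mul, List.length_cons]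
    have := windowLength_genC_mulVec_le i (window (l.map (genC n)).prod)
    omega

lemma windowLength_genC'_mulVec_of_val_eq_one (hn : 0 < n) {i : Fin n} (hi : i.val = 1)
    (u : Fin n → ℝ) (h0 : 0 < u ⟨0, hn⟩) (h1 : u ⟨0, hn⟩ < |u i|) :
    windowLength (genC' n hn i *ᵥ u) + 3 * (if u i < 0 then 1 else 0) =
      windowLength u + 3 * (if 0 < u i then 1 else 0) := by
  have hi0 : i.val ≠ 0 := by omega
  have hprev : prev i = ⟨0, hn⟩ := Fin.ext (by simp [prev, hi])
  have h0i : (⟨0, hn⟩ : Fin n) ≠ i := fun h => by simp [← h] at hi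
  have e₁ : (genC n i *ᵥ u) ⟨0, hn⟩ = u i ∧ (genC n i *ᵥ u) i = u ⟨0, hn⟩ := by
    simp [genC_mulVec_of_ne_zero hi0, hprev]
  have e₂ : (genC n ⟨0, hn⟩ *ᵥ (genC n i *ᵥ u)) ⟨0, hn⟩ = -u i ∧
      (genC n ⟨0, hn⟩ *ᵥ (genC n i *ᵥ u)) i = u ⟨0, hn⟩ := by
    rw [genC_zero_mulVec, Function.update_self, Function.update_of_ne h0i.symm, e₁.1, e₁.2]
    exact ⟨rfl, rfl⟩
  have s₁ := windowLength_genC_mulVec hi0 u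
  have s₂ := windowLength_update_neg_zero hn (genC n i *ᵥ u)
  have s₃ := windowLength_genC_mulVec hi0 (genC n ⟨0, hn⟩ *ᵥ (genC n i *ᵥ u))
  rw [← genC_zero_mulVec, e₁.1] at s₂
  rw [hprev] at s₁ s₃
  rw [e₂.1, e₂.2] at s₃
  rw [genC', if_pos hi, ← mulVec_mulVec, ← mulVec_mulVec]
  -- as `0 < u 0 < |u i|`, the three steps of `t₂ t₁ t₂` all go up (`u i > 0`) or all go down
  rcases lt_or_gt_of_ne (abs_pos.1 (h0.trans h1)) with hneg | hpos
  · rw [abs_of_neg hneg] at h1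
    split_ifs at s₁ s₂ s₃ ⊢ <;> first | omega | (exfalso; linarith)
  · rw [abs_of_pos hpos] at h1
    split_ifs at s₁ s₂ s₃ ⊢ <;> first | omega | (exfalso; linarith)

lemma negCount_genC'_mulVec_of_val_eq_one (hn : 0 < n) {i : Fin n} (hi : i.val = 1)
    (u : Fin n → ℝ) :
    negCount (genC' n hn i *ᵥ u) + (if u i < 0 then 1 else 0) =
      negCount u + (if 0 < u i then 1 else 0) := by
  rw [genC'_mulVec_of_val_eq_one hn hi]
  exact negCount_update_neg u i

def IsSignedPermWindow (u : Fin n → ℝ) : Prop :=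
  ∃ σ : Equiv.Perm (Fin n), ∀ a, |u a| = (σ a : ℝ) + 1

lemma isSignedPermWindow_idWindow : IsSignedPermWindow (idWindow (n := n)) :=
  ⟨1, fun a => abs_of_pos (by simp only [idWindow]; positivity)⟩

namespace IsSignedPermWindow

variable {u : Fin n → ℝ}

lemma comp_perm (hu : IsSignedPermWindow u) (τ : Equiv.Perm (Fin n)) :
    IsSignedPermWindow (u ∘ τ) :=
  let ⟨σ, hσ⟩ := hu
  ⟨τ.trans σ, fun a => hσ (τ a)⟩

lemma update_neg (hu : IsSignedPermWindow u) (k : Fin n) :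
    IsSignedPermWindow (Function.update u k (-u k)) := by
  obtain ⟨σ, hσ⟩ := hu
  refine ⟨σ, fun a => ?_⟩
  by_cases ha : a = k
  · subst ha; rw [Function.update_self, abs_neg, hσ]
  · rw [Function.update_of_ne ha, hσ]

lemma genC_mulVec (hu : IsSignedPermWindow u) (i : Fin n) :
    IsSignedPermWindow (genC n i *ᵥ u) := by
  by_cases hi : i.val = 0
  · rw [show i = ⟨0, i.pos⟩ from Fin.ext hi, genC_zero_mulVec]
    exact hu.update_neg _
  · rw [genC_mulVec_of_ne_zero hi]
    exact hu.comp_perm _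

lemma genC'_mulVec (hn : 0 < n) (hu : IsSignedPermWindow u) (i : Fin n) :
    IsSignedPermWindow (genC' n hn i *ᵥ u) := by
  unfold genC'
  split_ifs
  · simp only [← mulVec_mulVec]
    exact ((hu.genC_mulVec i).genC_mulVec _).genC_mulVec i
  · exact hu.genC_mulVec i

lemma injective (hu : IsSignedPermWindow u) : Function.Injective u := by
  obtain ⟨σ, hσ⟩ := hu
  intro a b h
  have : (σ a : ℝ) + 1 = σ b + 1 := by rw [← hσ, ← hσ, h]
  exact σ.injective (Fin.ext (by exact_mod_cast add_right_cancel this))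

lemma one_lt_abs (hn : 0 < n) (hu : IsSignedPermWindow u) (h0 : u ⟨0, hn⟩ = 1) {a : Fin n}
    (ha : a ≠ ⟨0, hn⟩) : 1 < |u a| := by
  obtain ⟨σ, hσ⟩ := hu
  have hσ0 : (σ ⟨0, hn⟩ : ℕ) = 0 := by
    have := hσ ⟨0, hn⟩
    rw [h0, abs_one] at this
    exact_mod_cast (by linarith : ((σ ⟨0, hn⟩ : ℕ) : ℝ) = 0)
  have hσa : (σ a : ℕ) ≠ 0 := fun h => ha (σ.injective (Fin.ext (h.trans hσ0.symm)))
  rw [hσ]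
  have : (1 : ℝ) ≤ σ a := by exact_mod_cast Nat.one_le_iff_ne_zero.2 hσa
  linarith

lemma eq_idWindow (hu : IsSignedPermWindow u) (hmono : StrictMono u) (hpos : ∀ a, 0 < u a) :
    u = idWindow := by
  obtain ⟨σ, hσ⟩ := hu
  have hu : ∀ a, u a = (σ a : ℝ) + 1 := fun a => by rw [← hσ, abs_of_pos (hpos a)]
  have hσmono : StrictMono σ := fun a b hab => by
    have := hmono hab
    rw [hu, hu] at this
    exact Fin.lt_def.2 (by exact_mod_cast (add_lt_add_iff_right 1).1 this)
  funext a
  rw [hu, hσmono.apply_eq, idWindow]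

end IsSignedPermWindow

/-- Windows of the elements of `Ω'₀`. -/
structure IsPrimedWindow (hn : 0 < n) (u : Fin n → ℝ) : Prop where
  isSignedPermWindow : IsSignedPermWindow u
  apply_zero : u ⟨0, hn⟩ = 1

lemma IsPrimedWindow.genC'_mulVec {hn : 0 < n} {u : Fin n → ℝ} (hu : IsPrimedWindow hn u)
    {i : Fin n} (hi : 1 ≤ i.val) : IsPrimedWindow hn (genC' n hn i *ᵥ u) := by
  refine ⟨hu.isSignedPermWindow.genC'_mulVec hn i, ?_⟩
  have h0i : (⟨0, hn⟩ : Fin n) ≠ i := fun h => by simp [← h] at hi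
  by_cases h1 : i.val = 1
  · rw [genC'_mulVec_of_val_eq_one hn h1, Function.update_of_ne h0i, hu.apply_zero]
  · have h0p : (⟨0, hn⟩ : Fin n) ≠ prev i := fun h => by
      simp only [prev, Fin.ext_iff] at h; omega
    rw [genC', if_neg h1, genC_mulVec_of_ne_zero (by omega), Function.comp_apply,
      Equiv.swap_apply_of_ne_of_ne h0i h0p, hu.apply_zero]

lemma isPrimedWindow_window_prod (hn : 0 < n) (l : List (Fin n)) (hl : ∀ i ∈ l, 1 ≤ i.val) :
    IsPrimedWindow hn (window (l.map (genC' n hn)).prod) := by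
  induction l with
  | nil => exact ⟨window_one (n := n) ▸ isSignedPermWindow_idWindow, by simp [window_one, idWindow]⟩
  | cons i l ih =>
    rw [List.map_cons, List.prod_cons, window_mul]
    exact (ih fun j hj => hl j (List.mem_cons_of_mem i hj)).genC'_mulVec (hl i List.mem_cons_self)

lemma windowLength_add_countP_le (hn : 0 < n) (l : List (Fin n)) (hl : ∀ i ∈ l, 1 ≤ i.val) :
    windowLength (window (l.map (genC' n hn)).prod) + l.countP (fun i => i.val = 1) ≤
      l.length + 3 * negCount (window (l.map (genC' n hn)).prod) := by
  induction l with
  | nil => simp [window_one, windowLength_idWindow]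
  | cons i l ih =>
    have hl' : ∀ j ∈ l, 1 ≤ j.val := fun j hj => hl j (List.mem_cons_of_mem i hj)
    have ih := ih hl'
    have hu := isPrimedWindow_window_prod hn l hl'
    rw [List.map_cons, List.prod_cons, window_mul, List.countP_cons, List.length_cons]
    set u := window (l.map (genC' n hn)).prod
    by_cases h1 : i.val = 1
    · have h0i : i ≠ ⟨0, hn⟩ := fun h => by simp [h] at h1
      have hL := windowLength_genC'_mulVec_of_val_eq_one hn h1 u
        (by rw [hu.apply_zero]; norm_num)
        (by rw [hu.apply_zero]; exact hu.isSignedPermWindow.one_lt_abs hn hu.apply_zero h0i)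
      have hN := negCount_genC'_mulVec_of_val_eq_one hn h1 u
      simp only [h1, decide_true, if_true]
      split_ifs at hL hN <;> omega
    · have hi := hl i List.mem_cons_self
      have hL := windowLength_genC_mulVec_le i u
      rw [genC', if_neg h1, negCount_genC_mulVec (by omega)]
      simp only [h1, decide_false, Bool.false_eq_true, if_false]
      omega

def primedLength (u : Fin n → ℝ) : ℤ := windowLength u - 2 * negCount u

lemma IsPrimedWindow.exists_descent {hn : 0 < n} {u : Fin n → ℝ} (hu : IsPrimedWindow hn u)
    (hne : u ≠ idWindow) :
    ∃ i : Fin n, 1 ≤ i.val ∧ windowLength (genC' n hn i *ᵥ u) < windowLength u ∧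
      primedLength (genC' n hn i *ᵥ u) + 1 = primedLength u := by
  by_contra! hno
  simp only [primedLength] at hno
  apply hne
  -- otherwise `t'₂` (when `u 1 < 0`) or `t_b` (when `u b < u (b - 1)`) would be a descent
  have hstep : ∀ a b : Fin n, b.val = a.val + 1 → u a < u b := by
    intro a b hab
    by_cases ha : a.val = 0
    · have hb0 : b ≠ ⟨0, hn⟩ := fun h => by simp [h] at hab
      have hb1 := hu.isSignedPermWindow.one_lt_abs hn hu.apply_zero hb0
      rw [show a = ⟨0, hn⟩ from Fin.ext ha, hu.apply_zero]
      by_contra! hle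
      have hneg : u b < 0 := by cases abs_cases (u b) <;> linarith
      have hL := windowLength_genC'_mulVec_of_val_eq_one hn (i := b) (by omega) u
        (by rw [hu.apply_zero]; norm_num) (by rwa [hu.apply_zero])
      have hN := negCount_genC'_mulVec_of_val_eq_one hn (i := b) (by omega) u
      rw [if_pos hneg, if_neg (not_lt.2 hneg.le)] at hL hN
      exact hno b (by omega) (by omega) (by omega)
    · have hprev : prev b = a := Fin.ext (by simp only [prev]; omega)
      have hgen : genC' n hn b = genC n b := if_neg (by omega)
      refine lt_of_le_of_ne (not_lt.1 fun hlt => ?_)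
        (hu.isSignedPermWindow.injective.ne fun h => by simp [h] at hab)
      have hL := windowLength_genC_mulVec (i := b) (by omega) u
      have hN := negCount_genC_mulVec (i := b) (by omega) u
      rw [hprev, if_pos hlt, if_neg (not_lt.2 hlt.le)] at hL
      have := hno b (by omega)
      rw [hgen] at this
      exact this (by omega) (by omega)
  have hmono := Fin.strictMono_of_val_eq_succ hstep
  refine hu.isSignedPermWindow.eq_idWindow hmono fun a => ?_
  calc (0 : ℝ) < u ⟨0, hn⟩ := by rw [hu.apply_zero]; norm_num
    _ ≤ u a := hmono.monotone (Fin.le_def.2 (Nat.zero_le _))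

lemma IsPrimedWindow.exists_word {hn : 0 < n} {u : Fin n → ℝ} (hu : IsPrimedWindow hn u) :
    ∃ m : List (Fin n), (∀ i ∈ m, 1 ≤ i.val) ∧ window (m.map (genC' n hn)).prod = u ∧
      (m.length : ℤ) ≤ primedLength u := by
  induction hk : windowLength u using Nat.strong_induction_on generalizing u with
  | _ k ih =>
  by_cases hid : u = idWindow
  · subst hid
    exact ⟨[], by simp, window_one,
      by simp [primedLength, negCount_idWindow, windowLength_idWindow]⟩
  obtain ⟨i, hi, hlt, hlen⟩ := hu.exists_descent hid
  obtain ⟨m, hm, hmu, hmlen⟩ := ih _ (hk ▸ hlt) (hu.genC'_mulVec hi) rfl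
  refine ⟨i :: m, ?_, ?_, ?_⟩
  · simpa [hi] using hm
  · rw [List.map_cons, List.prod_cons, window_mul, hmu, mulVec_mulVec, genC'_mul_self, one_mulVec]
  · rw [List.length_cons, Nat.cast_succ]
    omega

end TypeC

end

open TypeC

theorem expanded_word_is_reduced_general
    (n : ℕ) (hn : 0 < n) (l : List (Fin n))
    (hl : ∀ i ∈ l, 1 ≤ i.val)
    (hred : ∀ l' : List (Fin n), (∀ i ∈ l', 1 ≤ i.val) →
      (l'.map (genC' n hn)).prod = (l.map (genC' n hn)).prod → l.length ≤ l'.length) :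
    letI L : List (Fin n) :=
      l.foldr (fun i acc => (if i.val = 1 then [i, ⟨0, hn⟩, i] else [i]) ++ acc) []
    (L.map (genC n)).prod = (l.map (genC' n hn)).prod ∧
      ∀ l'' : List (Fin n),
        (l''.map (genC n)).prod = (l.map (genC' n hn)).prod → L.length ≤ l''.length := by
  refine ⟨prod_map_genC_expandWord hn l, fun l'' h'' => ?_⟩
  change (expandWord hn l).length ≤ l''.length
  have hupper := windowLength_window_prod_le l''
  rw [h''] at hupper
  obtain ⟨m, hm, hmu, hmlen⟩ := (isPrimedWindow_window_prod hn l hl).exists_word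
  have hlm : l.length ≤ m.length := hred m hm (prod_map_genC'_eq_of_window_eq hn hmu)
  have hcount := windowLength_add_countP_le hn l hl
  rw [length_expandWord]
  unfold primedLength at hmlen
  omega

/-- If `t'_{i₁} ⋯ t'_{i_ℓ}` is a reduced expression for `w ∈ Ω'₀` (with respect
to the generators `t'_2, …, t'_n`), then replacing each occurrence of `t'_2` by
`t₂ t₁ t₂` and leaving the other letters unchanged yields a reduced expression
for `w` in `Ω₀` with respect to `t₁, …, t_n`. -/
theorem expanded_word_is_reduced
    (n : ℕ) (hn2 : 2 ≤ n) (hn : 0 < n) (l : List (Fin n))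
    (hl : ∀ i ∈ l, 1 ≤ i.val)
    (hred : ∀ l' : List (Fin n), (∀ i ∈ l', 1 ≤ i.val) →
      (l'.map (genC' n hn)).prod = (l.map (genC' n hn)).prod → l.length ≤ l'.length) :
    letI L : List (Fin n) :=
      l.foldr (fun i acc => (if i.val = 1 then [i, ⟨0, hn⟩, i] else [i]) ++ acc) []
    (L.map (genC n)).prod = (l.map (genC' n hn)).prod ∧
      ∀ l'' : List (Fin n),
        (l''.map (genC n)).prod = (l.map (genC' n hn)).prod → L.length ≤ l''.length :=
  expanded_word_is_reduced_general n hn l hl hred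
end

section
/- Let w ∈ Ω'_0 (the type C_{n−1} subgroup of the type C_n signed permutation group Ω_0 generated by t'_2 = t_2 t_1 t_2 and t_3,…,t_n). Then the number t(w) of indices i such that w(2ε_i) is a negative root equals the number of occurrences of the generator t'_2 in any reduced expression of w with respect to the generators t'_2, t_3, …, t_n. -/
/-! In the signed-permutation picture, `w ∈ Ω'₀` sends `ε_b` to `±ε_{π b}`, and the sign is
`(-1)^k` where `k` counts the letters `t'_2` of the word at which the image of `ε_b` (under
the part of the word to their right) is `±ε_2`. These counts add up to the number of letters
`t'_2`, so it suffices to see that each of them is at most one in a reduced word. If the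
trajectory of `ε_b` met `t'_2` twice, the subword `m` strictly between the two occurrences
would fix the line of `ε_2`; then `t'_2 m t'_2 = m`, and deleting both occurrences gives a
shorter word for `w`. -/

open Equiv

namespace TypeCWeyl

variable {n : ℕ}

def signedPermMatrix (π : Perm (Fin n)) (ε : Fin n → ℝ) : Matrix (Fin n) (Fin n) ℝ :=
  Matrix.of fun a b => if a = π b then ε b else 0

theorem signedPermMatrix_mul (π π' : Perm (Fin n)) (ε ε' : Fin n → ℝ) :
    signedPermMatrix π ε * signedPermMatrix π' ε' =
      signedPermMatrix (π'.trans π) fun b => ε (π' b) * ε' b := by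
  ext a b
  simp only [signedPermMatrix, Matrix.mul_apply, Matrix.of_apply, trans_apply]
  rw [Finset.sum_eq_single (π' b) (fun c _ hc => by simp [hc]) (by simp)]
  by_cases h : a = π (π' b) <;> simp [h]

theorem signedPermMatrix_one : signedPermMatrix (Equiv.refl (Fin n)) (fun _ => 1) = 1 := by
  ext a b
  by_cases h : a = b <;> simp [signedPermMatrix, Matrix.one_apply, h]

theorem exists_signedPermMatrix_neg_iff (π : Perm (Fin n)) (ε : Fin n → ℝ) (i : Fin n) :
    (∃ j, signedPermMatrix π ε j i < 0) ↔ ε i < 0 := by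
  constructor
  · rintro ⟨j, hj⟩
    by_contra h
    simp only [signedPermMatrix, Matrix.of_apply] at hj
    split_ifs at hj <;> linarith
  · exact fun h => ⟨π i, by simpa [signedPermMatrix] using h⟩

theorem neg_one_pow_neg_iff_odd (k : ℕ) : (-1 : ℝ) ^ k < 0 ↔ Odd k := by
  rcases Nat.even_or_odd k with h | h
  · simp [h.neg_one_pow, Nat.not_odd_iff_even.mpr h]
  · simp [h.neg_one_pow, h]

def letterPerm (a : Fin n) : Perm (Fin n) :=
  if a.val = 1 then Equiv.refl _ else swap a ⟨a.val - 1, by omega⟩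

def letterSign (a x : Fin n) : ℝ :=
  if a.val = 1 ∧ x.val = 1 then -1 else 1

theorem genC_eq_signedPermMatrix_swap {a : Fin n} (ha : a.val ≠ 0) :
    genC n a = signedPermMatrix (swap a ⟨a.val - 1, by omega⟩) (fun _ => 1) := by
  simp only [genC, ha, if_false]
  rfl

theorem genC_zero_eq_signedPermMatrix (hn : 0 < n) :
    genC n ⟨0, hn⟩ =
      signedPermMatrix (Equiv.refl _) (fun x => if x = ⟨0, hn⟩ then -1 else 1) := by
  ext a b
  simp only [genC, if_true, Matrix.diagonal_apply, signedPermMatrix, Matrix.of_apply,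
    refl_apply]
  split_ifs <;> simp_all

theorem genC'_eq_signedPermMatrix (hn : 0 < n) {a : Fin n} (ha : 1 ≤ a.val) :
    genC' n hn a = signedPermMatrix (letterPerm a) (letterSign a) := by
  by_cases h1 : a.val = 1
  · have h0 : (⟨a.val - 1, by omega⟩ : Fin n) = ⟨0, hn⟩ := Fin.ext (by simp [h1])
    rw [genC', if_pos h1, genC_eq_signedPermMatrix_swap (by omega), h0,
      genC_zero_eq_signedPermMatrix hn, signedPermMatrix_mul, signedPermMatrix_mul]
    -- `t₂ t₁ t₂` is the sign change in the coordinate `a` that `t₂` exchanges with `0`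
    have hswap : ∀ b, swap a ⟨0, hn⟩ b = ⟨0, hn⟩ ↔ b.val = 1 := fun b => by
      rw [swap_apply_eq_iff, swap_apply_right, Fin.ext_iff, h1]
    congr 1
    · ext x
      simp [letterPerm, h1]
    · ext b
      simp only [letterSign, h1, true_and, mul_one, one_mul, hswap]
  · rw [genC', if_neg h1, genC_eq_signedPermMatrix_swap (by omega), letterPerm, if_neg h1]
    congr 1
    ext b
    simp [letterSign, h1]

theorem genC'_mul_signedPermMatrix_mul_genC' (hn : 0 < n) {a : Fin n} (ha : a.val = 1)
    {π : Perm (Fin n)} (hπ : π a = a) (ε : Fin n → ℝ) :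
    genC' n hn a * signedPermMatrix π ε * genC' n hn a = signedPermMatrix π ε := by
  rw [genC'_eq_signedPermMatrix hn ha.ge, signedPermMatrix_mul, signedPermMatrix_mul]
  have hπa : ∀ b, (π b).val = 1 ↔ b.val = 1 := fun b => by
    rw [← ha, ← Fin.ext_iff, ← Fin.ext_iff]
    conv_lhs => rw [← hπ]
    exact π.injective.eq_iff
  have hperm : letterPerm a = Equiv.refl _ := if_pos ha
  rw [hperm]
  congr 1
  ext b
  by_cases hb : b.val = 1 <;> simp [letterSign, ha, hπa, hb]

def wordPerm : List (Fin n) → Perm (Fin n)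
  | [] => Equiv.refl _
  | a :: t => (wordPerm t).trans (letterPerm a)

/-- The number of letters `t'_2` of the word at which the part of the word to their right has
moved `b` to the coordinate `1` (that of `ε_2`, coordinates being numbered from `0`). -/
def flips (b : Fin n) : List (Fin n) → ℕ
  | [] => 0
  | a :: t => flips b t + if a.val = 1 ∧ (wordPerm t b).val = 1 then 1 else 0

theorem wordPerm_append (u v : List (Fin n)) :
    wordPerm (u ++ v) = (wordPerm v).trans (wordPerm u) := by
  induction u with
  | nil => rfl
  | cons a t ih => simp only [List.cons_append, wordPerm, ih, trans_assoc]

theorem prod_map_genC'_eq (hn : 0 < n) (l : List (Fin n)) (hl : ∀ i ∈ l, 1 ≤ i.val) :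
    (l.map (genC' n hn)).prod = signedPermMatrix (wordPerm l) (fun b => (-1) ^ flips b l) := by
  induction l with
  | nil => exact signedPermMatrix_one.symm
  | cons a t ih =>
    rw [List.map_cons, List.prod_cons, ih fun i hi => hl i (List.mem_cons_of_mem _ hi),
      genC'_eq_signedPermMatrix hn (hl a List.mem_cons_self), signedPermMatrix_mul]
    congr 1
    ext b
    simp only [flips, letterSign, pow_add]
    split_ifs <;> ring

theorem sum_flips_eq_count (hn2 : 2 ≤ n) (l : List (Fin n)) :
    ∑ b, flips b l = l.count ⟨1, hn2⟩ := by
  induction l with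
  | nil => simp [flips]
  | cons a t ih =>
    simp only [flips, Finset.sum_add_distrib, ih, List.count_cons, beq_iff_eq]
    by_cases ha : a.val = 1
    · obtain rfl : a = ⟨1, hn2⟩ := Fin.ext ha
      have hb : ∀ b, (wordPerm t b).val = 1 ↔ b = (wordPerm t).symm ⟨1, hn2⟩ := fun b => by
        rw [eq_symm_apply, Fin.ext_iff]
      simp [hb]
    · simp [ha, Fin.ext_iff]

theorem exists_append_cons_of_lt_flips {b : Fin n} {k : ℕ} {l : List (Fin n)}
    (h : k < flips b l) :
    ∃ u a v, l = u ++ a :: v ∧ a.val = 1 ∧ (wordPerm v b).val = 1 ∧ k ≤ flips b v := by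
  induction l with
  | nil => simp [flips] at h
  | cons a t ih =>
    by_cases ht : k < flips b t
    · obtain ⟨u, a', v, rfl, ha', hv, hk⟩ := ih ht
      exact ⟨a :: u, a', v, rfl, ha', hv, hk⟩
    · simp only [flips] at h
      split_ifs at h with ha
      · exact ⟨[], a, t, rfl, ha.1, ha.2, by omega⟩
      · omega

theorem flips_le_one (hn : 0 < n) (l : List (Fin n)) (hl : ∀ i ∈ l, 1 ≤ i.val)
    (hred : ∀ l' : List (Fin n), (∀ i ∈ l', 1 ≤ i.val) →
      (l'.map (genC' n hn)).prod = (l.map (genC' n hn)).prod → l.length ≤ l'.length)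
    (b : Fin n) : flips b l ≤ 1 := by
  by_contra! h
  obtain ⟨u, a, v, rfl, ha, hvb, hv⟩ := exists_append_cons_of_lt_flips h
  obtain ⟨m, a', v', rfl, ha', hv'b, -⟩ := exists_append_cons_of_lt_flips hv
  obtain rfl : a = a' := Fin.ext (ha.trans ha'.symm)
  have hm : ∀ i ∈ m, 1 ≤ i.val := fun i hi => hl i (by simp [hi])
  have hfix : wordPerm m a = a := by
    have hv'b : wordPerm v' b = a := Fin.ext (hv'b.trans ha.symm)
    rw [wordPerm_append] at hvb
    simpa [wordPerm, letterPerm, ha, hv'b, Fin.ext_iff] using hvb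
  have hprod : ((u ++ (m ++ v')).map (genC' n hn)).prod =
      ((u ++ a :: (m ++ a :: v')).map (genC' n hn)).prod := by
    simp only [List.map_append, List.map_cons, List.prod_append, List.prod_cons,
      prod_map_genC'_eq hn m hm]
    conv_lhs => rw [← genC'_mul_signedPermMatrix_mul_genC' hn ha hfix]
    simp only [mul_assoc]
  have hlen := hred _
    (fun i hi => hl i (by simp only [List.mem_append, List.mem_cons] at hi ⊢; tauto)) hprod
  simp at hlen

theorem card_filter_odd_eq_sum {ι : Type*} [Fintype ι] (f : ι → ℕ) (hf : ∀ i, f i ≤ 1) :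
    (Finset.univ.filter fun i => Odd (f i)).card = ∑ i, f i := by
  rw [Finset.card_filter]
  refine Finset.sum_congr rfl fun i _ => ?_
  rcases Nat.le_one_iff_eq_zero_or_eq_one.mp (hf i) with h | h <;> simp [h]

end TypeCWeyl

open TypeCWeyl in
/-- For `w ∈ Ω'₀` (the type `C_{n−1}` subgroup of the signed permutation group
`Ω₀` generated by `t'_2 = t₂t₁t₂` and `t₃, …, t_n`), the number `t(w)` of
indices `i` such that `w(2ε_i)` is a negative root (i.e. the `i`-th column of
the matrix of `w` has a negative entry) equals the number of occurrences of the
generator `t'_2` in any reduced expression of `w` with respect to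
`t'_2, t₃, …, t_n`. -/
theorem flip_count_eq_count_t'2
    (n : ℕ) (hn2 : 2 ≤ n) (hn : 0 < n) (l : List (Fin n))
    (hl : ∀ i ∈ l, 1 ≤ i.val)
    (hred : ∀ l' : List (Fin n), (∀ i ∈ l', 1 ≤ i.val) →
      (l'.map (genC' n hn)).prod = (l.map (genC' n hn)).prod → l.length ≤ l'.length) :
    Nat.card {i : Fin n // ∃ j : Fin n, (l.map (genC' n hn)).prod j i < 0}
      = l.count ⟨1, hn2⟩ := by
  have hneg : ∀ i, (∃ j, (l.map (genC' n hn)).prod j i < 0) ↔ Odd (flips i l) := fun i => by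
    rw [prod_map_genC'_eq hn l hl, exists_signedPermMatrix_neg_iff, neg_one_pow_neg_iff_odd]
  rw [Nat.card_congr (subtypeEquivRight hneg), Nat.card_eq_fintype_card, Fintype.card_subtype,
    card_filter_odd_eq_sum _ (flips_le_one hn l hl hred), sum_flips_eq_count hn2]
end

section
/- Let G be a group, P = M ⋉ U a subgroup written as a semidirect-type product (every p ∈ P factors uniquely as p = m·u with m ∈ M, u ∈ U), and Q = L ⋉ V ⊆ P another such subgroup with L ⊆ M and V = (M ∩ V)·U. Let K ≤ G be a subgroup with K ∩ P = (K ∩ M)(K ∩ U), and suppose additionally (K ∩ M) ∩ (M ∩ Q) = (K ∩ M ∩ L)(K ∩ M ∩ V). Then K ∩ Q = (K ∩ L)(K ∩ V) and moreover K ∩ V = (K ∩ M ∩ V)(K ∩ U). -/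
open scoped Pointwise

/-!
If `K ∩ P = (K ∩ M)(K ∩ U)` and `U ≤ H ≤ P`, then `K ∩ H = (K ∩ M ∩ H)(K ∩ U)`: writing
`k ∈ K ∩ H` as `m u`, the factor `m = k u⁻¹` lies in `H`. Taking `H = V` gives the second
claim. Taking `H = Q` and factoring `K ∩ M ∩ Q = (K ∩ M ∩ L)(K ∩ M ∩ V)` gives
`K ∩ Q = (K ∩ M ∩ L)(K ∩ M ∩ V)(K ∩ U) = (K ∩ M ∩ L)(K ∩ V)`, whence the first.
-/

namespace Subgroup

variable {G : Type*} [Group G]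

theorem left_le_of_coe_eq_mul {Q L V : Subgroup G} (hQ : (Q : Set G) = L * V) : L ≤ Q :=
  SetLike.coe_subset_coe.mp (hQ ▸ Set.subset_mul_left _ V.one_mem)

theorem right_le_of_coe_eq_mul {Q L V : Subgroup G} (hQ : (Q : Set G) = L * V) : V ≤ Q :=
  SetLike.coe_subset_coe.mp (hQ ▸ Set.subset_mul_right _ L.one_mem)

theorem coe_inf_eq_mul_of_le {K P M U H : Subgroup G}
    (hK : ((K ⊓ P : Subgroup G) : Set G)
      = ((K ⊓ M : Subgroup G) : Set G) * ((K ⊓ U : Subgroup G) : Set G))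
    (hUH : U ≤ H) (hHP : H ≤ P) :
    ((K ⊓ H : Subgroup G) : Set G)
      = ((K ⊓ M ⊓ H : Subgroup G) : Set G) * ((K ⊓ U : Subgroup G) : Set G) := by
  refine subset_antisymm (fun k hk => ?_) (mul_subset ?_ ?_)
  · have hkP : k ∈ ((K ⊓ P : Subgroup G) : Set G) := ⟨hk.1, hHP hk.2⟩
    obtain ⟨m, hm, u, hu, rfl⟩ := hK ▸ hkP
    have hmH : m ∈ H := by simpa using H.mul_mem hk.2 (H.inv_mem (hUH hu.2))
    exact ⟨m, ⟨hm, hmH⟩, u, hu, rfl⟩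
  · exact SetLike.coe_subset_coe.mpr (inf_le_inf_right H inf_le_left)
  · exact SetLike.coe_subset_coe.mpr (inf_le_inf_left K hUH)

end Subgroup

theorem iwahori_factorization_transitivity_general
    {G : Type*} [Group G] (P M U Q L V K : Subgroup G)
    (hQ : (Q : Set G) = (L : Set G) * (V : Set G))
    (hUV : U ≤ V) (hQP : Q ≤ P)
    (hK : ((K ⊓ P : Subgroup G) : Set G)
      = ((K ⊓ M : Subgroup G) : Set G) * ((K ⊓ U : Subgroup G) : Set G))
    (hKM : ((K ⊓ M ⊓ (M ⊓ Q) : Subgroup G) : Set G)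
      = ((K ⊓ M ⊓ L : Subgroup G) : Set G) * ((K ⊓ M ⊓ V : Subgroup G) : Set G)) :
    ((K ⊓ Q : Subgroup G) : Set G)
        = ((K ⊓ L : Subgroup G) : Set G) * ((K ⊓ V : Subgroup G) : Set G) ∧
    ((K ⊓ V : Subgroup G) : Set G)
        = ((K ⊓ M ⊓ V : Subgroup G) : Set G) * ((K ⊓ U : Subgroup G) : Set G) := by
  have hLQ := Subgroup.left_le_of_coe_eq_mul hQ
  have hVQ := Subgroup.right_le_of_coe_eq_mul hQ
  have hKV := Subgroup.coe_inf_eq_mul_of_le hK hUV (hVQ.trans hQP)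
  have hKQ := Subgroup.coe_inf_eq_mul_of_le hK (hUV.trans hVQ) hQP
  refine ⟨subset_antisymm ?_ (Subgroup.mul_subset ?_ ?_), hKV⟩
  · calc ((K ⊓ Q : Subgroup G) : Set G)
        = ((K ⊓ M ⊓ (M ⊓ Q) : Subgroup G) : Set G) * ((K ⊓ U : Subgroup G) : Set G) := by
          rw [hKQ, inf_assoc K M (M ⊓ Q), inf_left_idem, inf_assoc]
      _ = ((K ⊓ M ⊓ L : Subgroup G) : Set G) * ((K ⊓ V : Subgroup G) : Set G) := by
          rw [hKM, mul_assoc, hKV]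
      _ ⊆ ((K ⊓ L : Subgroup G) : Set G) * ((K ⊓ V : Subgroup G) : Set G) :=
          Set.mul_subset_mul_right (SetLike.coe_subset_coe.mpr (inf_le_inf_right L inf_le_left))
  · exact SetLike.coe_subset_coe.mpr (inf_le_inf_left K hLQ)
  · exact SetLike.coe_subset_coe.mpr (inf_le_inf_left K hVQ)

/-- Abstract Iwahori-factorization transitivity. Let `G` be a group,
`P = M·U` with unique factorization, `Q = L·V ⊆ P` with `L ≤ M`, `U ≤ V` and
`V = (M ∩ V)·U`, and `K` a subgroup with `K ∩ P = (K ∩ M)(K ∩ U)` and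
`(K ∩ M) ∩ (M ∩ Q) = (K ∩ M ∩ L)(K ∩ M ∩ V)`. Then
`K ∩ Q = (K ∩ L)(K ∩ V)` and `K ∩ V = (K ∩ M ∩ V)(K ∩ U)`. -/
theorem iwahori_factorization_transitivity
    {G : Type*} [Group G] (P M U Q L V K : Subgroup G)
    (hP : (P : Set G) = (M : Set G) * (U : Set G))
    (hPuniq : ∀ m ∈ M, ∀ u ∈ U, ∀ m' ∈ M, ∀ u' ∈ U,
      (m : G) * u = m' * u' → m = m' ∧ u = u')
    (hQ : (Q : Set G) = (L : Set G) * (V : Set G))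
    (hLM : L ≤ M) (hUV : U ≤ V) (hQP : Q ≤ P)
    (hV : (V : Set G) = ((M ⊓ V : Subgroup G) : Set G) * (U : Set G))
    (hK : ((K ⊓ P : Subgroup G) : Set G)
      = ((K ⊓ M : Subgroup G) : Set G) * ((K ⊓ U : Subgroup G) : Set G))
    (hKM : ((K ⊓ M ⊓ (M ⊓ Q) : Subgroup G) : Set G)
      = ((K ⊓ M ⊓ L : Subgroup G) : Set G) * ((K ⊓ M ⊓ V : Subgroup G) : Set G)) :
    ((K ⊓ Q : Subgroup G) : Set G)
        = ((K ⊓ L : Subgroup G) : Set G) * ((K ⊓ V : Subgroup G) : Set G) ∧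
    ((K ⊓ V : Subgroup G) : Set G)
        = ((K ⊓ M ⊓ V : Subgroup G) : Set G) * ((K ⊓ U : Subgroup G) : Set G) :=
  iwahori_factorization_transitivity_general P M U Q L V K hQ hUV hQP hK hKM
end
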